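/- Let k > 0 and c₀ > 0 be such that for every T > 0 there exists C_T > 0 with: for every λ ≥ 0 and every y₀ ∈ E_λ, ‖y₀‖² ≤ C_T e^{2c₀ λ^{k/2}} ∫₀^T ∫_ω |y(t,x)|² dμ(x) dt. Then for every T > 0 and every θ > c₀ there exists C > 0 such that for every ε > 0 and every y₀ ∈ L²(X,μ) with ‖y₀‖_{k/2,θ} < ∞: ‖y₀‖² ≤ C ε^{−c₀/(θ−c₀)} ∫₀^T ∫_ω |y(t,x)|² dμ(x) dt + ε ‖y₀‖²_{k/2,θ}. -/

import Mathlib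

/-!
Cut `y₀` at a spectral level `L`: `y₀ = P + Q` with `P ∈ E_L` and `Q` orthogonal to `E_L`.
Low-frequency observability bounds `‖P‖²` by `C_T e^{2c₀L^{k/2}}` times the observation of `P`,
which is at most twice that of `y₀` plus `2T‖Q‖²` because the heat semigroup is a contraction.
The Gevrey weight gives `‖Q‖² ≤ e^{-2θL^{k/2}} ‖y₀‖²_{k/2,θ}`, so the tail carries the factor
`e^{-2(θ-c₀)L^{k/2}}`; choosing `L` to make this factor `ε` turns the cost `e^{2c₀L^{k/2}}`
into `ε^{-c₀/(θ-c₀)}`.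
-/

open MeasureTheory

/-- The abstract heat semigroup solution `y(t) = ∑ⱼ e^{-λⱼ t} ⟨y₀, φⱼ⟩ φⱼ`
associated to a Hilbert basis `Φ` of `L²(X, μ)` and nonnegative spectrum `lam`. -/
noncomputable def heatSol {X : Type*} [MeasurableSpace X] {μ : Measure X}
    (Φ : HilbertBasis ℕ ℝ (Lp ℝ 2 μ)) (lam : ℕ → ℝ) (y₀ : Lp ℝ 2 μ) (t : ℝ) :
    Lp ℝ 2 μ :=
  ∑' j, (Real.exp (-(lam j) * t) * (inner ℝ y₀ (Φ j) : ℝ)) • (Φ j : Lp ℝ 2 μ)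

/-- The spectral subspace `E_l = span {φⱼ : λⱼ ≤ l}`. -/
noncomputable def specSpace {X : Type*} [MeasurableSpace X] {μ : Measure X}
    (Φ : HilbertBasis ℕ ℝ (Lp ℝ 2 μ)) (lam : ℕ → ℝ) (l : ℝ) :
    Submodule ℝ (Lp ℝ 2 μ) :=
  Submodule.span ℝ {v | ∃ j, lam j ≤ l ∧ v = Φ j}

/-- The observation `∫_{t₁}^{t₂} ∫_ω |y(t,x)|² dμ(x) dt` of the heat solution on `ω`. -/
noncomputable def obsInt {X : Type*} [MeasurableSpace X] {μ : Measure X}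
    (Φ : HilbertBasis ℕ ℝ (Lp ℝ 2 μ)) (lam : ℕ → ℝ) (ω : Set X)
    (y₀ : Lp ℝ 2 μ) (t₁ t₂ : ℝ) : ℝ :=
  ∫ t in Set.Ioc t₁ t₂, ∫ x in ω, (heatSol Φ lam y₀ t x) ^ 2 ∂μ

namespace HilbertBasis

variable {ι E : Type*} [NormedAddCommGroup E] [InnerProductSpace ℝ E] (b : HilbertBasis ι ℝ E)

theorem summable_inner_sq (x : E) : Summable fun i => inner ℝ x (b i) ^ 2 :=
  (b.summable_inner_mul_inner x x).congr fun i => by rw [real_inner_comm x (b i), sq]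

theorem norm_sq_eq_tsum_inner_sq (x : E) : ‖x‖ ^ 2 = ∑' i, inner ℝ x (b i) ^ 2 := by
  rw [← real_inner_self_eq_norm_sq, ← b.tsum_inner_mul_inner x x]
  exact tsum_congr fun i => by rw [real_inner_comm x (b i), sq]

theorem summable_smul_iff [CompleteSpace E] (a : ι → ℝ) :
    Summable (fun i => a i • b i) ↔ Summable fun i => a i ^ 2 := by
  simpa using b.orthonormal.orthogonalFamily.summable_iff_norm_sq_summable a

theorem inner_tsum_smul {a : ι → ℝ} (ha : Summable fun i => a i • b i) (j : ι) :
    inner ℝ (∑' i, a i • b i) (b j) = a j := by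
  classical
  rw [real_inner_comm, ← innerSL_apply_apply ℝ, ContinuousLinearMap.map_tsum _ ha]
  simp [orthonormal_iff_ite.mp b.orthonormal]

end HilbertBasis

theorem sq_exp_neg_mul_le_one {a t : ℝ} (ha : 0 ≤ a) (ht : 0 ≤ t) : Real.exp (-a * t) ^ 2 ≤ 1 :=
  pow_le_one₀ (Real.exp_pos _).le (Real.exp_le_one_iff.mpr (by nlinarith [mul_nonneg ha ht]))

section HeatSemigroup

variable {X : Type*} [MeasurableSpace X] {μ : Measure X} (Φ : HilbertBasis ℕ ℝ (Lp ℝ 2 μ))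
  {lam : ℕ → ℝ}

theorem summable_heatSol (hlam : ∀ j, 0 ≤ lam j) (u : Lp ℝ 2 μ) {t : ℝ} (ht : 0 ≤ t) :
    Summable fun j => (Real.exp (-(lam j) * t) * inner ℝ u (Φ j)) • (Φ j : Lp ℝ 2 μ) := by
  rw [Φ.summable_smul_iff]
  refine (Φ.summable_inner_sq u).of_nonneg_of_le (fun _ => sq_nonneg _) fun j => ?_
  rw [mul_pow]
  exact mul_le_of_le_one_left (sq_nonneg _) (sq_exp_neg_mul_le_one (hlam j) ht)

theorem inner_heatSol (hlam : ∀ j, 0 ≤ lam j) (u : Lp ℝ 2 μ) {t : ℝ} (ht : 0 ≤ t) (i : ℕ) :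
    inner ℝ (heatSol Φ lam u t) (Φ i) = Real.exp (-(lam i) * t) * inner ℝ u (Φ i) :=
  Φ.inner_tsum_smul (summable_heatSol Φ hlam u ht) i

theorem heatSol_sub (hlam : ∀ j, 0 ≤ lam j) (u v : Lp ℝ 2 μ) {t : ℝ} (ht : 0 ≤ t) :
    heatSol Φ lam (u - v) t = heatSol Φ lam u t - heatSol Φ lam v t := by
  rw [heatSol, heatSol, heatSol,
    ← (summable_heatSol Φ hlam u ht).tsum_sub (summable_heatSol Φ hlam v ht)]
  exact tsum_congr fun j => by rw [inner_sub_left, mul_sub, sub_smul]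

theorem norm_heatSol_le (hlam : ∀ j, 0 ≤ lam j) (u : Lp ℝ 2 μ) {t : ℝ} (ht : 0 ≤ t) :
    ‖heatSol Φ lam u t‖ ≤ ‖u‖ := by
  refine le_of_sq_le_sq ?_ (norm_nonneg u)
  rw [Φ.norm_sq_eq_tsum_inner_sq, Φ.norm_sq_eq_tsum_inner_sq]
  refine (Φ.summable_inner_sq _).tsum_le_tsum (fun j => ?_) (Φ.summable_inner_sq u)
  rw [inner_heatSol Φ hlam u ht, mul_pow]
  exact mul_le_of_le_one_left (sq_nonneg _) (sq_exp_neg_mul_le_one (hlam j) ht)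

-- For `t < 0` the defining series may diverge, and then `heatSol` is the junk value `0`.
theorem aestronglyMeasurable_heatSol (hlam : ∀ j, 0 ≤ lam j) (u : Lp ℝ 2 μ) :
    AEStronglyMeasurable (heatSol Φ lam u) (volume.restrict (Set.Ici 0)) := by
  refine aestronglyMeasurable_of_tendsto_ae (Filter.atTop : Filter (Finset ℕ))
    (f := fun s t => ∑ j ∈ s, (Real.exp (-(lam j) * t) * inner ℝ u (Φ j)) • (Φ j : Lp ℝ 2 μ))
    (fun s => Continuous.aestronglyMeasurable (by fun_prop)) ?_
  rw [ae_restrict_iff' measurableSet_Ici]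
  exact ae_of_all _ fun t ht => (summable_heatSol Φ hlam u ht).hasSum

end HeatSemigroup

section Observation

variable {X : Type*} [MeasurableSpace X] {μ : Measure X}

theorem norm_sq_eq_integral_sq (f : Lp ℝ 2 μ) : ‖f‖ ^ 2 = ∫ x, f x ^ 2 ∂μ := by
  rw [← real_inner_self_eq_norm_sq, L2.inner_def]
  exact integral_congr_ae (ae_of_all _ fun x => by simp [sq])

theorem setIntegral_sq_eq_norm_sq_restrict (ω : Set X) (f : Lp ℝ 2 μ) :
    ∫ x in ω, f x ^ 2 ∂μ = ‖LpToLpRestrictCLM X ℝ ℝ μ 2 ω f‖ ^ 2 := by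
  rw [norm_sq_eq_integral_sq]
  exact integral_congr_ae ((LpToLpRestrictCLM_coeFn ℝ ω f).mono fun x hx => by simp only [hx])

theorem norm_LpToLpRestrictCLM_apply_le {𝕜 F : Type*} [NontriviallyNormedField 𝕜]
    [NormedAddCommGroup F] [NormedSpace 𝕜 F] {p : ENNReal} [Fact (1 ≤ p)] (ω : Set X)
    (f : Lp F p μ) : ‖LpToLpRestrictCLM X F 𝕜 μ p ω f‖ ≤ ‖f‖ :=
  norm_Lp_toLp_restrict_le ω f

variable (Φ : HilbertBasis ℕ ℝ (Lp ℝ 2 μ)) {lam : ℕ → ℝ} (ω : Set X)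

theorem obsInt_eq (u : Lp ℝ 2 μ) (t₁ t₂ : ℝ) :
    obsInt Φ lam ω u t₁ t₂
      = ∫ t in Set.Ioc t₁ t₂, ‖LpToLpRestrictCLM X ℝ ℝ μ 2 ω (heatSol Φ lam u t)‖ ^ 2 :=
  integral_congr_ae (ae_of_all _ fun _ => setIntegral_sq_eq_norm_sq_restrict ω _)

theorem obsInt_nonneg (u : Lp ℝ 2 μ) (t₁ t₂ : ℝ) : 0 ≤ obsInt Φ lam ω u t₁ t₂ := by
  rw [obsInt_eq]
  exact integral_nonneg fun _ => sq_nonneg _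

variable (hlam : ∀ j, 0 ≤ lam j)
include hlam

theorem integrableOn_norm_sq_restrict_heatSol (u : Lp ℝ 2 μ) (T : ℝ) :
    IntegrableOn (fun t => ‖LpToLpRestrictCLM X ℝ ℝ μ 2 ω (heatSol Φ lam u t)‖ ^ 2)
      (Set.Ioc 0 T) := by
  have hmeas : AEStronglyMeasurable
      (fun t => ‖LpToLpRestrictCLM X ℝ ℝ μ 2 ω (heatSol Φ lam u t)‖ ^ 2)
      (volume.restrict (Set.Ioc 0 T)) :=
    (((LpToLpRestrictCLM X ℝ ℝ μ 2 ω).continuous.comp_aestronglyMeasurable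
      (aestronglyMeasurable_heatSol Φ hlam u)).norm.pow 2).mono_measure
      (Measure.restrict_mono (Set.Ioc_subset_Ioi_self.trans Set.Ioi_subset_Ici_self) le_rfl)
  refine (integrableOn_const (C := ‖u‖ ^ 2) measure_Ioc_lt_top.ne).mono' hmeas ?_
  rw [ae_restrict_iff' measurableSet_Ioc]
  refine ae_of_all _ fun t ht => ?_
  rw [norm_pow, norm_norm]
  exact pow_le_pow_left₀ (norm_nonneg _)
    ((norm_LpToLpRestrictCLM_apply_le ω _).trans (norm_heatSol_le Φ hlam u ht.1.le)) 2

theorem obsInt_le {T : ℝ} (hT : 0 ≤ T) (u : Lp ℝ 2 μ) :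
    obsInt Φ lam ω u 0 T ≤ T * ‖u‖ ^ 2 := by
  rw [obsInt_eq]
  calc _ ≤ ∫ _ in Set.Ioc 0 T, ‖u‖ ^ 2 :=
        setIntegral_mono_on (integrableOn_norm_sq_restrict_heatSol Φ ω hlam u T)
          (integrableOn_const measure_Ioc_lt_top.ne) measurableSet_Ioc fun t ht =>
          pow_le_pow_left₀ (norm_nonneg _) ((norm_LpToLpRestrictCLM_apply_le ω _).trans
            (norm_heatSol_le Φ hlam u ht.1.le)) 2
    _ = T * ‖u‖ ^ 2 := by simp [hT]

theorem obsInt_sub_le (u v : Lp ℝ 2 μ) (T : ℝ) :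
    obsInt Φ lam ω (u - v) 0 T ≤ 2 * obsInt Φ lam ω u 0 T + 2 * obsInt Φ lam ω v 0 T := by
  have hu := (integrableOn_norm_sq_restrict_heatSol Φ ω hlam u T).const_mul 2
  have hv := (integrableOn_norm_sq_restrict_heatSol Φ ω hlam v T).const_mul 2
  simp only [obsInt_eq, ← integral_const_mul]
  rw [← integral_add hu hv]
  refine setIntegral_mono_on (integrableOn_norm_sq_restrict_heatSol Φ ω hlam (u - v) T)
    (hu.add hv) measurableSet_Ioc fun t ht => ?_
  rw [heatSol_sub Φ hlam u v ht.1.le, map_sub]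
  calc _ ≤ (‖LpToLpRestrictCLM X ℝ ℝ μ 2 ω (heatSol Φ lam u t)‖
        + ‖LpToLpRestrictCLM X ℝ ℝ μ 2 ω (heatSol Φ lam v t)‖) ^ 2 :=
        pow_le_pow_left₀ (norm_nonneg _) (norm_sub_le _ _) 2
    _ ≤ _ := add_sq_le.trans_eq (by ring)

end Observation

section Spectral

variable {X : Type*} [MeasurableSpace X] {μ : Measure X} (Φ : HilbertBasis ℕ ℝ (Lp ℝ 2 μ))
  {lam : ℕ → ℝ}

theorem finite_setOf_le_of_tendsto (hlamtop : Filter.Tendsto lam Filter.atTop Filter.atTop)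
    (l : ℝ) : {j | lam j ≤ l}.Finite := by
  have h := hlamtop.eventually_gt_atTop l
  rw [← Nat.cofinite_eq_atTop, Filter.eventually_cofinite] at h
  simpa using h

theorem exists_mem_specSpace_pythagoras {l : ℝ} (hfin : {j | lam j ≤ l}.Finite)
    (y : Lp ℝ 2 μ) :
    ∃ P ∈ specSpace Φ lam l, ‖y‖ ^ 2 = ‖P‖ ^ 2 + ‖y - P‖ ^ 2 ∧
      ∀ i, inner ℝ (y - P) (Φ i) = if lam i ≤ l then 0 else inner ℝ y (Φ i) := by
  classical
  set P := ∑ j ∈ hfin.toFinset, inner ℝ y (Φ j) • (Φ j : Lp ℝ 2 μ)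
  have hcoef : ∀ i, inner ℝ (y - P) (Φ i) = if lam i ≤ l then 0 else inner ℝ y (Φ i) := by
    intro i
    simp only [P, inner_sub_left, sum_inner, real_inner_smul_left,
      orthonormal_iff_ite.mp Φ.orthonormal, mul_ite, mul_one, mul_zero,
      Finset.sum_ite_eq', Set.Finite.mem_toFinset, Set.mem_ofPred_eq]
    split_ifs <;> simp
  have horth : inner ℝ P (y - P) = 0 := by
    have hQ : ∀ j ∈ hfin.toFinset, inner ℝ (Φ j) (y - P) = 0 := fun j hj => by
      rw [real_inner_comm, hcoef, if_pos (show lam j ≤ l from hfin.mem_toFinset.mp hj)]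
    generalize y - P = Q at hQ ⊢
    simp only [P, sum_inner, real_inner_smul_left]
    exact Finset.sum_eq_zero fun j hj => by rw [hQ j hj, mul_zero]
  refine ⟨P, Submodule.sum_mem _ fun j hj => Submodule.smul_mem _ _
    (Submodule.subset_span ⟨j, hfin.mem_toFinset.mp hj, rfl⟩), ?_, hcoef⟩
  have := norm_add_sq_eq_norm_sq_add_norm_sq_real horth
  rwa [add_sub_cancel, ← sq, ← sq, ← sq] at this

variable {κ θ : ℝ}

theorem norm_sq_le_tsum_gevrey (hlam : ∀ j, 0 ≤ lam j) (hθ : 0 ≤ θ) (y : Lp ℝ 2 μ)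
    (hG : Summable fun j => Real.exp (2 * θ * lam j ^ κ) * inner ℝ y (Φ j) ^ 2) :
    ‖y‖ ^ 2 ≤ ∑' j, Real.exp (2 * θ * lam j ^ κ) * inner ℝ y (Φ j) ^ 2 := by
  rw [Φ.norm_sq_eq_tsum_inner_sq]
  refine (Φ.summable_inner_sq y).tsum_le_tsum (fun j => ?_) hG
  have : 0 ≤ 2 * θ * lam j ^ κ := by have := Real.rpow_nonneg (hlam j) κ; positivity
  exact le_mul_of_one_le_left (sq_nonneg _) (Real.one_le_exp this)

theorem norm_sq_highFreq_le (hκ : 0 ≤ κ) (hθ : 0 ≤ θ) {l : ℝ} (hl : 0 ≤ l) (y Q : Lp ℝ 2 μ)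
    (hQ : ∀ i, inner ℝ Q (Φ i) = if lam i ≤ l then 0 else inner ℝ y (Φ i))
    (hG : Summable fun j => Real.exp (2 * θ * lam j ^ κ) * inner ℝ y (Φ j) ^ 2) :
    ‖Q‖ ^ 2 ≤ Real.exp (-(2 * θ * l ^ κ)) *
      ∑' j, Real.exp (2 * θ * lam j ^ κ) * inner ℝ y (Φ j) ^ 2 := by
  rw [Φ.norm_sq_eq_tsum_inner_sq, ← tsum_mul_left]
  refine (Φ.summable_inner_sq Q).tsum_le_tsum (fun j => ?_) (hG.mul_left _)
  rw [hQ j]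
  split_ifs with hj
  · rw [zero_pow two_ne_zero]
    positivity
  · have hpow : l ^ κ ≤ lam j ^ κ := Real.rpow_le_rpow hl (not_le.mp hj).le hκ
    rw [← mul_assoc, ← Real.exp_add]
    exact le_mul_of_one_le_left (sq_nonneg _) (Real.one_le_exp (by nlinarith))

end Spectral

theorem norm_sq_le_of_lowFreq_observability {X : Type*} [MeasurableSpace X] {μ : Measure X}
    (Φ : HilbertBasis ℕ ℝ (Lp ℝ 2 μ)) {lam : ℕ → ℝ} (ω : Set X) (hlam : ∀ j, 0 ≤ lam j)
    {κ c₀ θ T C L : ℝ} (hκ : 0 ≤ κ) (hc₀ : 0 ≤ c₀) (hθ : 0 ≤ θ) (hT : 0 ≤ T) (hC : 0 ≤ C)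
    (hL : 0 ≤ L) (hfin : {j | lam j ≤ L}.Finite)
    (hobs : ∀ P ∈ specSpace Φ lam L,
      ‖P‖ ^ 2 ≤ C * Real.exp (2 * c₀ * L ^ κ) * obsInt Φ lam ω P 0 T)
    (y₀ : Lp ℝ 2 μ)
    (hG : Summable fun j => Real.exp (2 * θ * lam j ^ κ) * inner ℝ y₀ (Φ j) ^ 2) :
    ‖y₀‖ ^ 2 ≤ 2 * C * Real.exp (2 * c₀ * L ^ κ) * obsInt Φ lam ω y₀ 0 T
      + (2 * C * T + 1) * Real.exp (-(2 * (θ - c₀) * L ^ κ))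
        * ∑' j, Real.exp (2 * θ * lam j ^ κ) * inner ℝ y₀ (Φ j) ^ 2 := by
  obtain ⟨P, hP, hpyth, hcoef⟩ := exists_mem_specSpace_pythagoras Φ hfin y₀
  set G := ∑' j, Real.exp (2 * θ * lam j ^ κ) * inner ℝ y₀ (Φ j) ^ 2
  set cost := Real.exp (2 * c₀ * L ^ κ)
  have hcost : 1 ≤ cost := Real.one_le_exp (by have := Real.rpow_nonneg hL κ; positivity)
  have htail : ‖y₀ - P‖ ^ 2 ≤ Real.exp (-(2 * θ * L ^ κ)) * G :=
    norm_sq_highFreq_le Φ hκ hθ hL y₀ (y₀ - P) hcoef hG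
  have hobsP : obsInt Φ lam ω P 0 T
      ≤ 2 * obsInt Φ lam ω y₀ 0 T + 2 * (T * ‖y₀ - P‖ ^ 2) := by
    have h := obsInt_sub_le Φ ω hlam y₀ (y₀ - P) T
    rw [sub_sub_cancel] at h
    linarith [obsInt_le Φ ω hlam hT (y₀ - P)]
  have hexp : cost * Real.exp (-(2 * θ * L ^ κ)) = Real.exp (-(2 * (θ - c₀) * L ^ κ)) := by
    rw [← Real.exp_add]; ring_nf
  calc ‖y₀‖ ^ 2 = ‖P‖ ^ 2 + ‖y₀ - P‖ ^ 2 := hpyth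
    _ ≤ C * cost * (2 * obsInt Φ lam ω y₀ 0 T + 2 * (T * ‖y₀ - P‖ ^ 2)) + ‖y₀ - P‖ ^ 2 := by
        gcongr
        exact (hobs P hP).trans (by gcongr)
    _ ≤ 2 * C * cost * obsInt Φ lam ω y₀ 0 T + (2 * C * T + 1) * cost * ‖y₀ - P‖ ^ 2 := by
        nlinarith [sq_nonneg ‖y₀ - P‖]
    _ ≤ 2 * C * cost * obsInt Φ lam ω y₀ 0 T
          + (2 * C * T + 1) * cost * (Real.exp (-(2 * θ * L ^ κ)) * G) := by gcongr
    _ = _ := by rw [← hexp]; ring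

theorem le_of_forall_exp_cutoff {N O G A K c δ ε : ℝ} (hδ : 0 < δ) (hA : 0 ≤ A) (hK : 1 ≤ K)
    (hO : 0 ≤ O) (hN : 0 ≤ N) (hNG : N ≤ G)
    (h : ∀ s ≥ 0, N ≤ A * Real.exp (2 * c * s) * O + K * Real.exp (-(2 * δ * s)) * G)
    (hε : 0 < ε) :
    N ≤ A * K ^ (c / δ) * ε ^ (-(c / δ)) * O + ε * G := by
  rcases le_or_gt K ε with hKε | hεK
  · have : 0 ≤ A * K ^ (c / δ) * ε ^ (-(c / δ)) * O := by positivity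
    nlinarith
  · have hK0 : 0 < K := by linarith
    have hratio : 1 < K / ε := (one_lt_div hε).mpr hεK
    set s := Real.log (K / ε) / (2 * δ)
    have hs : 0 ≤ s := div_nonneg (Real.log_nonneg hratio.le) (by positivity)
    have htail : K * Real.exp (-(2 * δ * s)) = ε := by
      rw [show 2 * δ * s = Real.log (K / ε) by simp only [s]; field_simp, Real.exp_neg,
        Real.exp_log (by positivity)]
      field_simp
    have hcost : Real.exp (2 * c * s) = K ^ (c / δ) * ε ^ (-(c / δ)) := by
      rw [show 2 * c * s = Real.log (K / ε) * (c / δ) by simp only [s]; field_simp,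
        ← Real.rpow_def_of_pos (by positivity), Real.div_rpow hK0.le hε.le,
        Real.rpow_neg hε.le, div_eq_mul_inv]
    calc N ≤ _ := h s hs
      _ = _ := by rw [htail, hcost]; ring

theorem statement11_general {X : Type*} [MeasurableSpace X] (μ : Measure X)
    (ω : Set X)
    (Φ : HilbertBasis ℕ ℝ (Lp ℝ 2 μ)) (lam : ℕ → ℝ)
    (hlam : ∀ j, 0 ≤ lam j)
    (hlamtop : Filter.Tendsto lam Filter.atTop Filter.atTop)
    (k c₀ : ℝ) (hk : 0 < k) (hc₀ : 0 < c₀)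
    (hobs : ∀ T > (0 : ℝ), ∃ C_T > (0 : ℝ), ∀ l ≥ (0 : ℝ), ∀ y₀ ∈ specSpace Φ lam l,
      ‖y₀‖ ^ 2 ≤ C_T * Real.exp (2 * c₀ * l ^ (k / 2)) * obsInt Φ lam ω y₀ 0 T) :
    ∀ T > (0 : ℝ), ∀ θ : ℝ, c₀ < θ → ∃ C > (0 : ℝ), ∀ ε > (0 : ℝ),
      ∀ y₀ : Lp ℝ 2 μ,
        Summable (fun j => Real.exp (2 * θ * (lam j) ^ (k / 2)) *
          (inner ℝ y₀ (Φ j) : ℝ) ^ 2) →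
        ‖y₀‖ ^ 2 ≤ C * ε ^ (-(c₀ / (θ - c₀))) * obsInt Φ lam ω y₀ 0 T
          + ε * ∑' j, Real.exp (2 * θ * (lam j) ^ (k / 2)) *
              (inner ℝ y₀ (Φ j) : ℝ) ^ 2 := by
  intro T hT θ hθ
  obtain ⟨C_T, hC_T, hlow⟩ := hobs T hT
  refine ⟨2 * C_T * (2 * C_T * T + 1) ^ (c₀ / (θ - c₀)), by positivity,
    fun ε hε y₀ hG => ?_⟩
  have hθ0 : 0 ≤ θ := by linarith
  refine le_of_forall_exp_cutoff (sub_pos.mpr hθ) (by positivity) (by nlinarith)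
    (obsInt_nonneg Φ ω y₀ 0 T) (sq_nonneg _) (norm_sq_le_tsum_gevrey Φ hlam hθ0 y₀ hG)
    (fun s hs => ?_) hε
  have hL : (s ^ (2 / k)) ^ (k / 2) = s := by
    rw [← Real.rpow_mul hs, show 2 / k * (k / 2) = 1 by field_simp, Real.rpow_one]
  have h := norm_sq_le_of_lowFreq_observability Φ ω hlam (L := s ^ (2 / k)) (by positivity)
    hc₀.le hθ0 hT.le hC_T.le (Real.rpow_nonneg hs _) (finite_setOf_le_of_tendsto hlamtop _)
    (hlow _ (Real.rpow_nonneg hs _)) y₀ hG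
  rwa [hL] at h

/-- Approximate observability with polynomial cost for Gevrey-regular data
(abstract spectral form): from low-frequency observability at cost
`e^{2c₀λ^{k/2}}`, for `θ > c₀` one gets
`‖y₀‖² ≤ C ε^{-c₀/(θ-c₀)} ∫₀^T ∫_ω |y|² + ε ‖y₀‖²_{k/2,θ}` where
`‖y₀‖²_{k/2,θ} = ∑ⱼ e^{2θλⱼ^{k/2}} ⟨y₀,φⱼ⟩²`. -/
theorem statement11 {X : Type*} [MeasurableSpace X] (μ : Measure X)
    (ω : Set X) (hω : MeasurableSet ω)
    (Φ : HilbertBasis ℕ ℝ (Lp ℝ 2 μ)) (lam : ℕ → ℝ)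
    (hlam : ∀ j, 0 ≤ lam j)
    (hlamtop : Filter.Tendsto lam Filter.atTop Filter.atTop)
    (k c₀ : ℝ) (hk : 0 < k) (hc₀ : 0 < c₀)
    (hobs : ∀ T > (0 : ℝ), ∃ C_T > (0 : ℝ), ∀ l ≥ (0 : ℝ), ∀ y₀ ∈ specSpace Φ lam l,
      ‖y₀‖ ^ 2 ≤ C_T * Real.exp (2 * c₀ * l ^ (k / 2)) * obsInt Φ lam ω y₀ 0 T) :
    ∀ T > (0 : ℝ), ∀ θ : ℝ, c₀ < θ → ∃ C > (0 : ℝ), ∀ ε > (0 : ℝ),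
      ∀ y₀ : Lp ℝ 2 μ,
        Summable (fun j => Real.exp (2 * θ * (lam j) ^ (k / 2)) *
          (inner ℝ y₀ (Φ j) : ℝ) ^ 2) →
        ‖y₀‖ ^ 2 ≤ C * ε ^ (-(c₀ / (θ - c₀))) * obsInt Φ lam ω y₀ 0 T
          + ε * ∑' j, Real.exp (2 * θ * (lam j) ^ (k / 2)) *
              (inner ℝ y₀ (Φ j) : ℝ) ^ 2 :=
  statement11_general μ ω Φ lam hlam hlamtop k c₀ hk hc₀ hobs
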